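/- (Non-granularity of the YWIS lower approximation.) Let X = {x₁,…,x₅}, a = (0, 0, 0.2, 0.91, 1), R(x,y) = 1 − |a(x) − a(y)| (a T_L-equivalence relation), and A = (1, 1, 1, 0, 0). For y ∈ X let g_y(x) = I_L(R(x,y), A(x)) and define the YWIS lower approximation of A with identity RIM quantifier by L(y) = ⨍ g_y dμ*_y, the Sugeno integral of g_y w.r.t. the monotone measure μ*_y(E) = (sum of the |E| smallest values of R(·,y)) / (Σ_{x∈X} R(x,y)). Then L(x₄) > min_{x∈X} I_L(R(x,x₄), L(x)); hence L is not a fixed point of the classical lower approximation and in particular L is not granularly representable w.r.t. R. -/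

import Mathlib

/-- The Łukasiewicz t-norm. -/
noncomputable def TL (x y : ℝ) : ℝ := max 0 (x + y - 1)

/-- The Łukasiewicz (residual) implicator. -/
noncomputable def IL (x y : ℝ) : ℝ := min 1 (1 - x + y)

/-- `R` is a `T`-equivalence relation: a `[0,1]`-valued reflexive, symmetric and
`T`-transitive fuzzy relation. -/
structure IsTEquiv {X : Type*} (T : ℝ → ℝ → ℝ) (R : X → X → ℝ) : Prop where
  mem : ∀ x y, R x y ∈ Set.Icc (0:ℝ) 1
  refl : ∀ x, R x x = 1
  symm : ∀ x y, R x y = R y x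
  trans : ∀ x y z, T (R x y) (R y z) ≤ R x z

/-- A monotone measure on a finite set `X`. -/
structure IsMonotoneMeasure {X : Type*} (μ : Set X → ℝ) : Prop where
  empty : μ ∅ = 0
  univ : μ Set.univ = 1
  mono : ∀ E F : Set X, E ⊆ F → μ E ≤ μ F

/-- The Sugeno integral of `f : X → ℝ` w.r.t. `μ` on the finite nonempty set `X`:
`max_i min(μ(A*_i), f(x*_i))` where `x*` enumerates `X` with
`f(x*_1) ≤ … ≤ f(x*_n)` and `A*_i = {x*_i, …, x*_n}`. -/
noncomputable def sugeno {X : Type*} [Fintype X] [Nonempty X] (μ : Set X → ℝ) (f : X → ℝ) : ℝ :=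
  let e : Fin (Fintype.card X) ≃ X := (Fintype.equivFin X).symm
  let σ : Equiv.Perm (Fin (Fintype.card X)) := Tuple.sort (f ∘ e)
  haveI : Nonempty (Fin (Fintype.card X)) := Fin.pos_iff_nonempty.mp Fintype.card_pos
  Finset.univ.sup' Finset.univ_nonempty
    (fun i => min (μ {x | ∃ j, i ≤ j ∧ e (σ j) = x}) (f (e (σ i))))

/-- `A` is granularly representable w.r.t. `T` and `R`: for every `y`,
`A(y)` is the supremum of the values `T(λ, R(x,y))` over all granules
`R_λ(x) = (z ↦ T(λ, R(x,z)))` that are (pointwise) contained in `A`. -/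
def GranRep {X : Type*} (T : ℝ → ℝ → ℝ) (R : X → X → ℝ) (A : X → ℝ) : Prop :=
  ∀ y, A y = sSup {v | ∃ l ∈ Set.Icc (0:ℝ) 1, ∃ x, (∀ z, T l (R x z) ≤ A z) ∧ v = T l (R x y)}

/-- `sortVal g i` is the (0-indexed) `i`-th smallest of the values of `g`. -/
noncomputable def sortVal {n : ℕ} (g : Fin n → ℝ) (i : Fin n) : ℝ := g (Tuple.sort g i)

/-! The integrand `g_y = I_L(R(·,y), A)` equals 1 exactly on `{x₁,x₂,x₃}` and, for `y = x₄, x₅`,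
stays below `μ*_y{x₁,x₂,x₃}` elsewhere, so the Sugeno integral is that measure:
`L(x₄) = 47/238` and `L(x₅) = 20/211`. Hence the classical lower approximation of `L` at `x₄` is at
most `I_L(R(x₅,x₄), L(x₅)) = 9/100 + 20/211 < 47/238`. A granularly representable set lies below its
classical lower approximation, because by `T_L`-transitivity every granule contained in it does. -/

open Finset

section Sugeno

variable {X : Type*} [Fintype X] [Nonempty X] {μ : Set X → ℝ}

theorem sugeno_eq_sup'_min (hμ : Monotone μ) (f : X → ℝ) :
    sugeno μ f = univ.sup' univ_nonempty (fun x => min (μ {y | f x ≤ f y}) (f x)) := by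
  unfold sugeno
  set e : Fin (Fintype.card X) ≃ X := (Fintype.equivFin X).symm
  set σ : Equiv.Perm (Fin (Fintype.card X)) := Tuple.sort (f ∘ e)
  have hsorted : Monotone ((f ∘ e) ∘ σ) := Tuple.monotone_sort (f ∘ e)
  apply le_antisymm
  · refine sup'_le _ _ fun i _ => ?_
    refine le_trans (min_le_min_right _ (hμ ?_))
      (le_sup' (fun x => min (μ {y | f x ≤ f y}) (f x)) (mem_univ (e (σ i))))
    rintro _ ⟨j, hij, rfl⟩
    exact hsorted hij
  · refine sup'_le _ _ fun x _ => ?_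
    -- the first position of the sorted enumeration whose value reaches `f x`
    set P := univ.filter fun j => f x ≤ f (e (σ j))
    have hP : σ.symm (e.symm x) ∈ P := by simp [P]
    set i := P.min' ⟨_, hP⟩
    have hfi : f (e (σ i)) = f x := by
      refine le_antisymm ?_ (mem_filter.mp (P.min'_mem ⟨_, hP⟩)).2
      simpa using hsorted (P.min'_le _ hP)
    refine le_trans ?_ (le_sup' (fun i => min (μ {x | ∃ j, i ≤ j ∧ e (σ j) = x}) (f (e (σ i))))
      (mem_univ i))
    rw [hfi]
    refine min_le_min_right _ (hμ fun y hy => ⟨σ.symm (e.symm y), P.min'_le _ ?_, by simp⟩)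
    simpa [P] using hy

theorem sugeno_eq_of_eqOn_of_lt (hμ : Monotone μ) {f : X → ℝ} {S : Set X} {t : ℝ}
    (hS : S.Nonempty) (hfS : ∀ x ∈ S, f x = t) (hf_lt : ∀ x ∉ S, f x < t)
    (hf_le : ∀ x ∉ S, f x ≤ μ S) (hμS : μ S ≤ t) : sugeno μ f = μ S := by
  have hupper : ∀ x ∈ S, {y | f x ≤ f y} = S := by
    intro x hx
    ext y
    by_cases hy : y ∈ S
    · simp [hy, hfS x hx, hfS y hy]
    · simpa [hy, hfS x hx] using hf_lt y hy
  rw [sugeno_eq_sup'_min hμ]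
  obtain ⟨x₀, hx₀⟩ := hS
  refine le_antisymm (sup'_le _ _ fun x _ => ?_) ?_
  · by_cases hx : x ∈ S
    · rw [hupper x hx]; exact min_le_left _ _
    · exact (min_le_right _ _).trans (hf_le x hx)
  · refine le_trans ?_ (le_sup' _ (mem_univ x₀))
    rw [hupper x₀ hx₀, hfS x₀ hx₀, min_eq_left hμS]

end Sugeno

/-- `μ*_y` is `smallestSumMeasure (R · y)`. -/
noncomputable def smallestSumMeasure {n : ℕ} (r : Fin n → ℝ) (E : Set (Fin n)) : ℝ :=
  (∑ k ∈ univ.filter (fun k : Fin n => (k : ℕ) < E.toFinite.toFinset.card), sortVal r k) /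
    ∑ x, r x

section SmallestSumMeasure

variable {n : ℕ} {r : Fin n → ℝ}

theorem smallestSumMeasure_mono (hr : ∀ x, 0 ≤ r x) : Monotone (smallestSumMeasure r) := by
  intro E F hEF
  refine div_le_div_of_nonneg_right ?_ (sum_nonneg fun x _ => hr x)
  refine sum_le_sum_of_subset_of_nonneg (monotone_filter_right _ fun k _ hk => ?_)
    fun k _ _ => hr _
  exact hk.trans_le (card_le_card (Set.Finite.toFinset_subset_toFinset.mpr hEF))

theorem sortVal_eq_comp {σ : Equiv.Perm (Fin n)} (hσ : Monotone (r ∘ σ)) :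
    sortVal r = r ∘ σ :=
  funext fun k => (congrFun (Tuple.comp_sort_eq_comp_iff_monotone.mpr hσ) k).symm

theorem smallestSumMeasure_coe {σ : Equiv.Perm (Fin n)} (hσ : Monotone (r ∘ σ))
    (s : Finset (Fin n)) :
    smallestSumMeasure r s = (∑ k ∈ univ.filter (fun k : Fin n => (k : ℕ) < #s), r (σ k)) /
      ∑ x, r x := by
  simp [smallestSumMeasure, sortVal_eq_comp hσ]

end SmallestSumMeasure

theorem isTEquiv_TL_one_sub_abs_sub {X : Type*} (a : X → ℝ) (ha : ∀ x, a x ∈ Set.Icc (0:ℝ) 1) :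
    IsTEquiv TL (fun x y => 1 - |a x - a y|) where
  mem x y := by
    obtain ⟨⟨hx₀, hx₁⟩, hy₀, hy₁⟩ := And.intro (ha x) (ha y)
    have : |a x - a y| ≤ 1 := abs_sub_le_iff.mpr ⟨by linarith, by linarith⟩
    constructor <;> linarith [abs_nonneg (a x - a y)]
  refl x := by simp
  symm x y := by rw [abs_sub_comm]
  trans x y z := by
    obtain ⟨⟨hx₀, hx₁⟩, hz₀, hz₁⟩ := And.intro (ha x) (ha z)
    have : |a x - a z| ≤ 1 := abs_sub_le_iff.mpr ⟨by linarith, by linarith⟩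
    exact max_le (by linarith) (by linarith [abs_sub_le (a x) (a y) (a z)])

theorem GranRep.le_IL {X : Type*} {R : X → X → ℝ} {B : X → ℝ} (hB : GranRep TL R B)
    (hR : IsTEquiv TL R) {x : X} (hBx : 0 ≤ B x) (y : X) : B y ≤ IL (R x y) (B x) := by
  have hRxy := hR.mem x y
  rw [hB y]
  refine Real.sSup_le ?_ (le_min zero_le_one (by linarith [hRxy.2]))
  rintro _ ⟨l, ⟨hl₀, hl₁⟩, w, hsub, rfl⟩
  -- `T_L`-transitivity moves the granule from `y` to `x`, where it is bounded by `B x`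
  have htrans : R w y + R y x - 1 ≤ R w x := (le_max_right _ _).trans (hR.trans w y x)
  have hgranule : l + R w x - 1 ≤ B x := (le_max_right _ _).trans (hsub x)
  have hRwy := (hR.mem w y).2
  refine max_le (le_min zero_le_one (by linarith [hRxy.2])) (le_min ?_ ?_) <;>
    linarith [hR.symm x y]

namespace YWISExample

noncomputable def a : Fin 5 → ℝ := ![0, 0, 1/5, 91/100, 1]

noncomputable def R (x y : Fin 5) : ℝ := 1 - |a x - a y|

def A : Fin 5 → ℝ := ![1, 1, 1, 0, 0]

def supportA : Finset (Fin 5) := {0, 1, 2}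

noncomputable def L (y : Fin 5) : ℝ :=
  sugeno (smallestSumMeasure fun x => R x y) fun x => IL (R x y) (A x)

theorem R_isTEquiv : IsTEquiv TL R :=
  isTEquiv_TL_one_sub_abs_sub a fun x => by fin_cases x <;> norm_num [a]

theorem IL_R_A_of_mem {x : Fin 5} (hx : x ∈ supportA) (y : Fin 5) : IL (R x y) (A x) = 1 := by
  have := (R_isTEquiv.mem x y).2
  fin_cases x <;> simp_all [supportA, IL, A]

theorem IL_R_A_of_notMem {x : Fin 5} (hx : x ∉ supportA) (y : Fin 5) :
    IL (R x y) (A x) = 1 - R x y := by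
  have := (R_isTEquiv.mem x y).1
  fin_cases x <;> simp_all [supportA, IL, A]

theorem L_eq {y : Fin 5} {c : ℝ} (hμ : smallestSumMeasure (fun x => R x y) supportA = c)
    (hc : c ≤ 1) (hoff : ∀ x ∉ supportA, 0 < R x y ∧ 1 - R x y ≤ c) : L y = c := by
  refine (sugeno_eq_of_eqOn_of_lt (smallestSumMeasure_mono fun x => (R_isTEquiv.mem x y).1)
    ⟨0, by simp [supportA]⟩ (fun x hx => IL_R_A_of_mem hx y) (fun x hx => ?_) (fun x hx => ?_)
    (hμ ▸ hc)).trans hμ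
  · rw [IL_R_A_of_notMem hx]; linarith [(hoff x hx).1]
  · rw [IL_R_A_of_notMem hx, hμ]; exact (hoff x hx).2

theorem smallestSumMeasure_R_three : smallestSumMeasure (fun x => R x 3) supportA = 47/238 := by
  have hσ : Monotone ((fun x => R x 3) ∘ Equiv.swap 3 4) := by
    refine Fin.monotone_iff_le_succ.mpr fun i => ?_
    fin_cases i <;> simp [R, a, Equiv.swap_apply_of_ne_of_ne] <;> norm_num
  rw [supportA, smallestSumMeasure_coe hσ, sum_filter, Fin.sum_univ_five]
  simp [R, a, Fin.sum_univ_five, Equiv.swap_apply_of_ne_of_ne]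
  norm_num

theorem smallestSumMeasure_R_four : smallestSumMeasure (fun x => R x 4) supportA = 20/211 := by
  have hσ : Monotone ((fun x => R x 4) ∘ Equiv.refl _) := by
    refine Fin.monotone_iff_le_succ.mpr fun i => ?_
    fin_cases i <;> simp [R, a] <;> norm_num
  rw [supportA, smallestSumMeasure_coe hσ, sum_filter, Fin.sum_univ_five]
  simp [R, a, Fin.sum_univ_five]
  norm_num

theorem L_three : L 3 = 47/238 :=
  L_eq smallestSumMeasure_R_three (by norm_num) fun x hx => by
    fin_cases x <;> simp_all [supportA, R, a] <;> norm_num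

theorem L_four : L 4 = 20/211 :=
  L_eq smallestSumMeasure_R_four (by norm_num) fun x hx => by
    fin_cases x <;> simp_all [supportA, R, a] <;> norm_num

theorem IL_R_four_three_L_four_lt : IL (R 4 3) (L 4) < L 3 := by
  rw [L_three, L_four]
  simp [IL, R, a]
  norm_num

end YWISExample

/-- the YWIS lower approximation (identity RIM quantifier) of
`A = (1,1,1,0,0)` w.r.t. the given `T_L`-equivalence relation on a 5-element set is
not a fixed point of the classical lower approximation (it exceeds it at `x₄`), and
is not granularly representable. The measure `μ*_y(E)` is the sum of the `|E|`
smallest values of `R(·,y)`, divided by `∑ x, R(x,y)`. -/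
theorem stmt19 :
    let a : Fin 5 → ℝ := ![0, 0, 1/5, 91/100, 1]
    let R : Fin 5 → Fin 5 → ℝ := fun x y => 1 - |a x - a y|
    let A : Fin 5 → ℝ := ![1, 1, 1, 0, 0]
    let μstar : Fin 5 → Set (Fin 5) → ℝ := fun y E =>
      (∑ k ∈ Finset.univ.filter (fun k : Fin 5 => (k : ℕ) < E.toFinite.toFinset.card),
          sortVal (fun x => R x y) k) / (∑ x, R x y)
    let L : Fin 5 → ℝ := fun y => sugeno (μstar y) (fun x => IL (R x y) (A x))
    IsTEquiv TL R ∧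
    Finset.univ.inf' Finset.univ_nonempty (fun x => IL (R x 3) (L x)) < L 3 ∧
    ¬ GranRep TL R L := by
  intro _ _ _ _ _
  open YWISExample in
  have hL₄ : 0 ≤ L 4 := by rw [L_four]; norm_num
  open YWISExample in
  exact ⟨R_isTEquiv, (inf'_le _ (mem_univ 4)).trans_lt IL_R_four_three_L_four_lt,
    fun hgran => (hgran.le_IL R_isTEquiv hL₄ 3).not_gt IL_R_four_three_L_four_lt⟩
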